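/- arXiv:2105.06884 — 4 statements merged into one kernel-verified Lean document; each statement's English description precedes it below -/
import Mathlib

section
/- Let g : [t₀,T] × ℝ → ℝ be measurable with |g(t,x)| ≤ (C/t^{q}) · exp(−M (x−x₀)²/t) for all t ∈ [t₀,T], x ∈ ℝ, where 0 < t₀ < T and C, M, q > 0. Define f(x) = (1/(T−t₀)) ∫_{t₀}^T G(t,x) dt where G(t,·) is an antiderivative-type family such that ∂ₓ G(t,x) = g(t,x) (i.e., G(t,·) is continuously differentiable with derivative g(t,·)). Then for every θ ∈ ℝ: ∫ℝ (f(x+θ) − f(x))² dx ≤ (𝔠 / t₀^{2q}) (θ² + |θ|³), where 𝔠 depends only on C, M, T and not on t₀ or θ. -/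
open MeasureTheory Real Set intervalIntegral
open scoped Interval

/-!
On `[t₀, T]` the Gaussian bound on `g t` is dominated by the single profile
`(C / t₀^q) exp (-(M / T) (y - x₀)²)`. Writing `f (x + θ) - f x` as the time average of
`∫_x^{x+θ} g t`, it is bounded by `|θ| (C / t₀^q)` times the largest value of that profile on
`[x - |θ|, x + |θ|]`. This maximum is `1` on a window of length `2|θ|` around `x₀` and a shifted
Gaussian outside it, so the square of the increment integrates to at most
`θ² (C² / t₀^{2q}) (2|θ| + 2 √(π T / M))`.
-/

lemma div_rpow_mul_exp_le_of_mem_Icc {C M q t₀ T t : ℝ} (hC : 0 ≤ C) (hM : 0 ≤ M) (hq : 0 ≤ q)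
    (ht₀ : 0 < t₀) (ht : t ∈ Icc t₀ T) (z : ℝ) :
    C / t ^ q * exp (-M * z ^ 2 / t) ≤ C / t₀ ^ q * exp (-(M / T) * z ^ 2) := by
  have ht_pos : 0 < t := ht₀.trans_le ht.1
  gcongr
  · exact ht.1
  · rw [neg_mul, neg_mul, neg_div, neg_le_neg_iff, div_mul_eq_mul_div]
    gcongr
    exact ht.2

lemma stronglyMeasurable_intervalIntegral_right {α E : Type*} [MeasurableSpace α]
    [NormedAddCommGroup E] [NormedSpace ℝ E] {g : α → ℝ → E}
    (hg : StronglyMeasurable (Function.uncurry g)) (a b : ℝ) :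
    StronglyMeasurable fun t => ∫ y in a..b, g t y :=
  hg.integral_prod_right.sub hg.integral_prod_right

/-- Only an inequality: when `F₂` is not integrable neither is `F₁`, and both integrals are `0`. -/
lemma norm_integral_sub_integral_le_of_eqOn_add {E : Type*} [NormedAddCommGroup E] [NormedSpace ℝ E]
    {F₁ F₂ φ : ℝ → E} {a b : ℝ} (hφ : IntervalIntegrable φ volume a b)
    (h : EqOn F₁ (F₂ + φ) (uIcc a b)) :
    ‖(∫ t in a..b, F₁ t) - ∫ t in a..b, F₂ t‖ ≤ ‖∫ t in a..b, φ t‖ := by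
  by_cases hF₂ : IntervalIntegrable F₂ volume a b
  · rw [integral_congr h, Pi.add_def, integral_add hF₂ hφ, add_sub_cancel_left]
  · have hF₁ : ¬ IntervalIntegrable F₁ volume a b := fun hF₁ =>
      hF₂ ((hF₁.sub hφ).congr fun t ht => by simp [h (uIoc_subset_uIcc ht)])
    rw [integral_undef hF₁, integral_undef hF₂, sub_zero, norm_zero]
    exact norm_nonneg _

lemma abs_integral_sub_integral_le_of_hasDerivAt {g G : ℝ → ℝ → ℝ} {t₀ T x x' K : ℝ}
    (hT : t₀ ≤ T) (hg : Measurable (Function.uncurry g))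
    (hG : ∀ t ∈ Icc t₀ T, ∀ y ∈ uIcc x x', HasDerivAt (G t) (g t y) y)
    (hK : ∀ t ∈ Icc t₀ T, ∀ y ∈ uIoc x x', |g t y| ≤ K) :
    |(∫ t in t₀..T, G t x') - ∫ t in t₀..T, G t x| ≤ K * |x' - x| * (T - t₀) := by
  have hΙ : Ι t₀ T ⊆ Icc t₀ T := by
    rw [uIoc_of_le hT]; exact Ioc_subset_Icc_self
  set φ : ℝ → ℝ := fun t => ∫ y in x..x', g t y
  have hφ_le : ∀ t ∈ Icc t₀ T, ‖φ t‖ ≤ K * |x' - x| := fun t ht =>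
    norm_integral_le_of_norm_le_const (hK t ht)
  have hφ_int : IntervalIntegrable φ volume t₀ T :=
    intervalIntegrable_const.mono_fun'
      (stronglyMeasurable_intervalIntegral_right hg.stronglyMeasurable x x').aestronglyMeasurable
      (ae_restrict_of_forall_mem measurableSet_uIoc fun t ht => hφ_le t (hΙ ht))
  have hFTC : EqOn (fun t => G t x') ((fun t => G t x) + φ) (uIcc t₀ T) := by
    intro t ht
    rw [uIcc_of_le hT] at ht
    have hgt : IntervalIntegrable (g t) volume x x' :=
      intervalIntegrable_const.mono_fun'
        (hg.comp measurable_prodMk_left).aestronglyMeasurable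
        (ae_restrict_of_forall_mem measurableSet_uIoc (hK t ht))
    simp only [Pi.add_apply, φ, integral_eq_sub_of_hasDerivAt (hG t ht) hgt]
    ring
  calc |(∫ t in t₀..T, G t x') - ∫ t in t₀..T, G t x|
      ≤ ‖∫ t in t₀..T, φ t‖ := norm_integral_sub_integral_le_of_eqOn_add hφ_int hFTC
    _ ≤ K * |x' - x| * |T - t₀| :=
      norm_integral_le_of_norm_le_const fun t ht => hφ_le t (hΙ ht)
    _ = K * |x' - x| * (T - t₀) := by rw [abs_of_nonneg (sub_nonneg.2 hT)]

/-- `⨆_{|y - x| ≤ r} exp (-b (y - a)²)` for `b ≥ 0`. -/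
noncomputable def gaussianPlateau (b a r x : ℝ) : ℝ := exp (-b * max (|x - a| - r) 0 ^ 2)

section gaussianPlateau

variable {b a r x : ℝ}

lemma gaussianPlateau_le_one (hb : 0 ≤ b) : gaussianPlateau b a r x ≤ 1 :=
  exp_le_one_iff.2 (mul_nonpos_of_nonpos_of_nonneg (neg_nonpos.2 hb) (sq_nonneg _))

lemma exp_neg_mul_sq_le_gaussianPlateau {y : ℝ} (hb : 0 ≤ b) (h : |y - x| ≤ r) :
    exp (-b * (y - a) ^ 2) ≤ gaussianPlateau b a r x := by
  have hdist : max (|x - a| - r) 0 ≤ |y - a| :=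
    max_le (by linarith [abs_sub_le x y a, abs_sub_comm x y]) (abs_nonneg _)
  have hsq : max (|x - a| - r) 0 ^ 2 ≤ (y - a) ^ 2 := by
    rw [← sq_abs (y - a)]
    exact pow_le_pow_left₀ (le_max_right _ _) hdist 2
  exact exp_le_exp.2 (mul_le_mul_of_nonpos_left hsq (neg_nonpos.2 hb))

lemma gaussianPlateau_le_indicator_add (b a r x : ℝ) :
    gaussianPlateau b a r x ≤ (Icc (a - r) (a + r)).indicator 1 x
      + exp (-b * (x - (a + r)) ^ 2) + exp (-b * (x - (a - r)) ^ 2) := by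
  have h₀ : 0 ≤ (Icc (a - r) (a + r)).indicator (1 : ℝ → ℝ) x :=
    indicator_nonneg (fun _ _ => zero_le_one) x
  have h₁ := exp_pos (-b * (x - (a + r)) ^ 2)
  have h₂ := exp_pos (-b * (x - (a - r)) ^ 2)
  unfold gaussianPlateau
  rcases le_or_gt |x - a| r with hx | hx
  · rw [max_eq_right (by linarith), indicator_of_mem (by constructor <;> linarith [abs_le.1 hx])]
    simp only [ne_eq, OfNat.ofNat_ne_zero, not_false_eq_true, zero_pow, mul_zero, exp_zero,
      Pi.one_apply]
    linarith
  · rw [max_eq_left (by linarith)]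
    rcases le_or_gt a x with hax | hax
    · rw [abs_of_nonneg (by linarith), show x - a - r = x - (a + r) by ring]
      linarith
    · rw [abs_of_neg (by linarith), show (-(x - a) - r) ^ 2 = (x - (a - r)) ^ 2 by ring]
      linarith

lemma integral_sq_le_of_abs_le_gaussianPlateau {F : ℝ → ℝ} {K : ℝ} (hb : 0 < b) (hr : 0 ≤ r)
    (hF : ∀ x, |F x| ≤ K * gaussianPlateau b a r x) :
    ∫ x, F x ^ 2 ≤ K ^ 2 * (2 * r + 2 * √(π / b)) := by
  set m : ℝ → ℝ := fun x => (Icc (a - r) (a + r)).indicator 1 x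
      + exp (-b * (x - (a + r)) ^ 2) + exp (-b * (x - (a - r)) ^ 2)
  have hind : Integrable ((Icc (a - r) (a + r)).indicator (1 : ℝ → ℝ)) :=
    (integrable_indicator_iff measurableSet_Icc).2 (integrableOn_const measure_Icc_lt_top.ne)
  have hgauss (c : ℝ) : Integrable fun x : ℝ => exp (-b * (x - c) ^ 2) :=
    (integrable_exp_neg_mul_sq hb).comp_sub_right c
  have hind_gauss : Integrable fun x =>
      (Icc (a - r) (a + r)).indicator 1 x + exp (-b * (x - (a + r)) ^ 2) := hind.add (hgauss _)
  have hm_int : Integrable m := hind_gauss.add (hgauss _)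
  have hm_integral : ∫ x, m x = 2 * r + 2 * √(π / b) := by
    rw [integral_add hind_gauss (hgauss _), integral_add hind (hgauss _),
      integral_indicator_one measurableSet_Icc, volume_real_Icc_of_le (by linarith),
      integral_sub_right_eq_self (fun x => exp (-b * x ^ 2)),
      integral_sub_right_eq_self (fun x => exp (-b * x ^ 2)), integral_gaussian]
    ring
  have hle (x : ℝ) : F x ^ 2 ≤ K ^ 2 * m x := by
    have hW₀ : 0 ≤ gaussianPlateau b a r x := (exp_pos _).le
    have hW₁ : gaussianPlateau b a r x ≤ 1 := gaussianPlateau_le_one hb.le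
    calc F x ^ 2 = |F x| ^ 2 := (sq_abs _).symm
      _ ≤ (K * gaussianPlateau b a r x) ^ 2 := pow_le_pow_left₀ (abs_nonneg _) (hF x) 2
      _ = K ^ 2 * gaussianPlateau b a r x ^ 2 := mul_pow _ _ _
      _ ≤ K ^ 2 * gaussianPlateau b a r x := by gcongr; exact pow_le_of_le_one hW₀ hW₁ two_ne_zero
      _ ≤ K ^ 2 * m x := by gcongr; exact gaussianPlateau_le_indicator_add b a r x
  calc ∫ x, F x ^ 2 ≤ ∫ x, K ^ 2 * m x :=
        integral_mono_of_nonneg (ae_of_all _ fun x => sq_nonneg _) (hm_int.const_mul _)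
          (ae_of_all _ hle)
    _ = K ^ 2 * (2 * r + 2 * √(π / b)) := by
      rw [MeasureTheory.integral_const_mul, hm_integral]

end gaussianPlateau

/-- Corollary 1 (Nikol'skii-type estimate): if `f` is the time-average over
`[t₀,T]` of a family `G t` whose spatial derivative `g t` satisfies a Gaussian
bound with singularity `t^{-q}`, then the squared L² increment of `f` is
bounded by `(𝔠 / t₀^(2q)) (θ² + |θ|³)`, with `𝔠` independent of `t₀` and `θ`. -/
theorem stmt_1 (C M q T x₀ : ℝ) (hC : 0 < C) (hM : 0 < M) (hq : 0 < q) (hT : 0 < T) :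
    ∃ 𝔠 > 0, ∀ (t₀ : ℝ), 0 < t₀ → t₀ < T →
      ∀ (g G : ℝ → ℝ → ℝ) (f : ℝ → ℝ),
        Measurable (Function.uncurry g) →
        (∀ t ∈ Icc t₀ T, ∀ x : ℝ, HasDerivAt (G t) (g t x) x) →
        (∀ t ∈ Icc t₀ T, ∀ x : ℝ,
          |g t x| ≤ C / t ^ q * Real.exp (-M * (x - x₀) ^ 2 / t)) →
        (∀ x : ℝ, f x = (1 / (T - t₀)) * ∫ t in t₀..T, G t x) →
        ∀ θ : ℝ,
          (∫ x : ℝ, (f (x + θ) - f x) ^ 2) ≤ 𝔠 / t₀ ^ (2 * q) * (θ ^ 2 + |θ| ^ 3) := by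
  set b := M / T
  have hb : 0 < b := div_pos hM hT
  set s := √(π / b)
  refine ⟨2 * C ^ 2 * (1 + s), by positivity, ?_⟩
  intro t₀ ht₀ ht₀T g G f hg hG hbound hf θ
  set c := C / t₀ ^ q
  have hg_le (t : ℝ) (ht : t ∈ Icc t₀ T) (y : ℝ) : |g t y| ≤ c * exp (-b * (y - x₀) ^ 2) :=
    (hbound t ht y).trans (div_rpow_mul_exp_le_of_mem_Icc hC.le hM.le hq.le ht₀ ht _)
  have hincr (x : ℝ) : |f (x + θ) - f x| ≤ |θ| * c * gaussianPlateau b x₀ |θ| x := by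
    have hΔ := abs_integral_sub_integral_le_of_hasDerivAt (x := x) (x' := x + θ)
      (K := c * gaussianPlateau b x₀ |θ| x) ht₀T.le hg
      (fun t ht y _ => hG t ht y) fun t ht y hy => (hg_le t ht y).trans <| by
        gcongr
        exact exp_neg_mul_sq_le_gaussianPlateau hb.le
          (by simpa using abs_sub_left_of_mem_uIcc (uIoc_subset_uIcc hy))
    have hTt : 0 < T - t₀ := sub_pos.2 ht₀T
    rw [add_sub_cancel_left] at hΔ
    rw [hf, hf, ← mul_sub, abs_mul, abs_of_pos (one_div_pos.2 hTt)]
    calc 1 / (T - t₀) * |(∫ t in t₀..T, G t (x + θ)) - ∫ t in t₀..T, G t x|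
        ≤ 1 / (T - t₀) * (c * gaussianPlateau b x₀ |θ| x * |θ| * (T - t₀)) := by gcongr
      _ = |θ| * c * gaussianPlateau b x₀ |θ| x := by field_simp
  have hc_sq : c ^ 2 = C ^ 2 / t₀ ^ (2 * q) := by
    rw [div_pow, ← rpow_mul_natCast ht₀.le, mul_comm]; norm_num
  calc ∫ x, (f (x + θ) - f x) ^ 2 ≤ (|θ| * c) ^ 2 * (2 * |θ| + 2 * s) :=
        integral_sq_le_of_abs_le_gaussianPlateau hb (abs_nonneg θ) hincr
    _ ≤ 2 * c ^ 2 * (1 + s) * (θ ^ 2 + |θ| ^ 3) := by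
        rw [← sq_abs θ]
        nlinarith [show 0 ≤ c ^ 2 * (|θ| ^ 2 + s * |θ| ^ 3) by positivity]
    _ = 2 * C ^ 2 * (1 + s) / t₀ ^ (2 * q) * (θ ^ 2 + |θ| ^ 3) := by rw [hc_sq]; ring
end

section
/- Let f : ℝ → ℝ be continuously differentiable with |f'(x)| ≤ C·exp(−M x²) for all x, where C, M > 0. Then for every θ ≥ 0: ∫ℝ (f(x+θ) − f(x))² dx ≤ θ² · [ 2C² ∫₀^∞ e^{−2Mx²} dx · 2 + C² θ ] , i.e. the squared L² increment is bounded by a constant times (θ² + θ³). -/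
/-!
By the mean value theorem, `(f (x + θ) - f x)² ≤ θ² sup_{[x, x + θ]} f'²`. If `f'²` is
dominated by a function `h` that increases on `(-∞, 0]` and decreases on `[0, ∞)`, this
supremum is at most `h x` when `x ≥ 0`, at most `h (x + θ)` when `x + θ ≤ 0`, and at most
`h 0` on the window `-θ < x < 0` in between. Integrating the sum of these three majorants
gives `∫ (f (x + θ) - f x)² ≤ θ² (2 ∫ h + θ h 0)`; take `h x = C² exp (-2 M x²)`.
-/

open MeasureTheory Real Set

theorem sq_sub_le_mul_sq_of_sq_deriv_le {f f' : ℝ → ℝ} {a b K : ℝ} (hab : a ≤ b)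
    (hf : ∀ t ∈ Icc a b, HasDerivWithinAt f (f' t) (Icc a b) t)
    (hK : ∀ t ∈ Ico a b, f' t ^ 2 ≤ K) :
    (f b - f a) ^ 2 ≤ K * (b - a) ^ 2 := by
  obtain rfl | hlt := hab.eq_or_lt
  · simp
  have hK0 : 0 ≤ K := (sq_nonneg _).trans (hK a ⟨le_rfl, hlt⟩)
  have hderiv : ∀ t ∈ Ico a b, ‖f' t‖ ≤ √K := fun t ht => by
    rw [norm_eq_abs, ← sqrt_sq_eq_abs]
    exact sqrt_le_sqrt (hK t ht)
  have hmvt := norm_image_sub_le_of_norm_deriv_le_segment' hf hderiv b ⟨hab, le_rfl⟩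
  calc (f b - f a) ^ 2 = ‖f b - f a‖ ^ 2 := (sq_abs _).symm
    _ ≤ (√K * (b - a)) ^ 2 := pow_le_pow_left₀ (norm_nonneg _) hmvt 2
    _ = K * (b - a) ^ 2 := by rw [mul_pow, sq_sqrt hK0]

noncomputable def windowMajorant (h : ℝ → ℝ) (θ x : ℝ) : ℝ :=
  h x + h (x + θ) + (Ioo (-θ) 0).indicator (fun _ => h 0) x

section windowMajorant

variable {h : ℝ → ℝ} {θ : ℝ}

theorem le_windowMajorant (h_mono : MonotoneOn h (Iic 0)) (h_anti : AntitoneOn h (Ici 0))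
    (h_nonneg : ∀ x, 0 ≤ h x) {x t : ℝ} (ht : t ∈ Icc x (x + θ)) :
    h t ≤ windowMajorant h θ x := by
  have hind : 0 ≤ (Ioo (-θ) 0).indicator (fun _ => h 0) x :=
    indicator_nonneg (fun _ _ => h_nonneg 0) x
  unfold windowMajorant
  rcases le_or_gt 0 x with hx | hx
  · have := h_anti hx (hx.trans ht.1) ht.1
    linarith [h_nonneg (x + θ)]
  rcases le_or_gt (x + θ) 0 with hxθ | hxθ
  · have := h_mono (ht.2.trans hxθ) hxθ ht.2
    linarith [h_nonneg x]
  have hpeak : h t ≤ h 0 := by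
    rcases le_total t 0 with ht0 | ht0
    · exact h_mono ht0 self_mem_Iic ht0
    · exact h_anti self_mem_Ici ht0 ht0
  rw [indicator_of_mem (show x ∈ Ioo (-θ) 0 from ⟨by linarith, hx⟩)]
  linarith [h_nonneg x, h_nonneg (x + θ)]

theorem integrable_windowMajorant (hint : Integrable h) : Integrable (windowMajorant h θ) :=
  (hint.add (hint.comp_add_right θ)).add <|
    (integrableOn_const measure_Ioo_lt_top.ne).integrable_indicator measurableSet_Ioo

theorem integral_windowMajorant (hint : Integrable h) (hθ : 0 ≤ θ) :
    ∫ x, windowMajorant h θ x = 2 * (∫ x, h x) + θ * h 0 := by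
  have hind : Integrable ((Ioo (-θ) 0).indicator fun _ => h 0) :=
    (integrableOn_const measure_Ioo_lt_top.ne).integrable_indicator measurableSet_Ioo
  have hsum : Integrable fun x => h x + h (x + θ) := hint.add (hint.comp_add_right θ)
  unfold windowMajorant
  rw [integral_add hsum hind, integral_add hint (hint.comp_add_right θ),
    integral_add_right_eq_self h θ, integral_indicator measurableSet_Ioo, setIntegral_const]
  rw [volume_real_Ioo, sub_neg_eq_add, zero_add, max_eq_left hθ, smul_eq_mul]
  ring

end windowMajorant

theorem integral_sq_sub_comp_add_le {f f' h : ℝ → ℝ} (hf : ∀ x, HasDerivAt f (f' x) x)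
    (hbound : ∀ x, f' x ^ 2 ≤ h x) (h_mono : MonotoneOn h (Iic 0))
    (h_anti : AntitoneOn h (Ici 0)) (hint : Integrable h) {θ : ℝ} (hθ : 0 ≤ θ) :
    ∫ x, (f (x + θ) - f x) ^ 2 ≤ θ ^ 2 * (2 * (∫ x, h x) + θ * h 0) := by
  have h_nonneg : ∀ x, 0 ≤ h x := fun x => (sq_nonneg _).trans (hbound x)
  have hpointwise : ∀ x, (f (x + θ) - f x) ^ 2 ≤ θ ^ 2 * windowMajorant h θ x := fun x => by
    have := sq_sub_le_mul_sq_of_sq_deriv_le (K := windowMajorant h θ x) (by linarith)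
      (fun t _ => (hf t).hasDerivWithinAt)
      fun t ht => (hbound t).trans <|
        le_windowMajorant h_mono h_anti h_nonneg (Ico_subset_Icc_self ht)
    simpa [mul_comm] using this
  calc ∫ x, (f (x + θ) - f x) ^ 2 ≤ ∫ x, θ ^ 2 * windowMajorant h θ x :=
        integral_mono_of_nonneg (.of_forall fun _ => sq_nonneg _)
          ((integrable_windowMajorant hint).const_mul _) (.of_forall hpointwise)
    _ = θ ^ 2 * (2 * (∫ x, h x) + θ * h 0) := by
      rw [integral_const_mul, integral_windowMajorant hint hθ]

theorem monotoneOn_const_mul_exp_neg_mul_sq {a c : ℝ} (ha : 0 ≤ a) (hc : 0 ≤ c) :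
    MonotoneOn (fun x : ℝ => c * exp (-a * x ^ 2)) (Iic 0) := fun x _ y hy hxy => by
  have : y ^ 2 ≤ x ^ 2 := by nlinarith [mem_Iic.mp hy]
  exact mul_le_mul_of_nonneg_left (exp_le_exp.2 (by nlinarith)) hc

theorem antitoneOn_const_mul_exp_neg_mul_sq {a c : ℝ} (ha : 0 ≤ a) (hc : 0 ≤ c) :
    AntitoneOn (fun x : ℝ => c * exp (-a * x ^ 2)) (Ici 0) := fun x hx y _ hxy => by
  have : x ^ 2 ≤ y ^ 2 := by nlinarith [mem_Ici.mp hx]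
  exact mul_le_mul_of_nonneg_left (exp_le_exp.2 (by nlinarith)) hc

theorem stmt_2_general (C M : ℝ) (hM : 0 < M) (f f' : ℝ → ℝ)
    (hf : ∀ x : ℝ, HasDerivAt f (f' x) x)
    (hbound : ∀ x : ℝ, |f' x| ≤ C * Real.exp (-M * x ^ 2)) :
    ∀ θ : ℝ, 0 ≤ θ →
      (∫ x : ℝ, (f (x + θ) - f x) ^ 2) ≤
        θ ^ 2 * (2 * C ^ 2 * (∫ x in Ioi (0 : ℝ), Real.exp (-2 * M * x ^ 2)) * 2
          + C ^ 2 * θ) := by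
  intro θ hθ
  have hsq : ∀ x, f' x ^ 2 ≤ C ^ 2 * exp (-(2 * M) * x ^ 2) := fun x => by
    have := pow_le_pow_left₀ (abs_nonneg _) (hbound x) 2
    rwa [sq_abs, mul_pow, ← exp_nat_mul,
      show ((2 : ℕ) : ℝ) * (-M * x ^ 2) = -(2 * M) * x ^ 2 by push_cast; ring] at this
  have key := integral_sq_sub_comp_add_le hf hsq
    (monotoneOn_const_mul_exp_neg_mul_sq (by positivity) (sq_nonneg C))
    (antitoneOn_const_mul_exp_neg_mul_sq (by positivity) (sq_nonneg C))
    ((integrable_exp_neg_mul_sq (by positivity)).const_mul _) hθ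
  have hhalf : ∫ x in Ioi (0 : ℝ), exp (-2 * M * x ^ 2) = √(π / (2 * M)) / 2 := by
    simpa only [neg_mul] using integral_gaussian_Ioi (2 * M)
  simp only [integral_const_mul, integral_gaussian, zero_pow two_ne_zero, mul_zero, exp_zero,
    mul_one] at key
  rw [hhalf]
  exact key.trans_eq (by ring)

/-- Key computational step in the proof of Corollary 1: for `f` continuously
differentiable with `|f'(x)| ≤ C exp(-M x²)` and `θ ≥ 0`, the squared L²
increment of `f` is bounded by `θ² (4 C² ∫₀^∞ e^{-2Mx²} dx + C² θ)`. -/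
theorem stmt_2 (C M : ℝ) (hC : 0 < C) (hM : 0 < M) (f f' : ℝ → ℝ)
    (hf : ∀ x : ℝ, HasDerivAt f (f' x) x) (hf'cont : Continuous f')
    (hbound : ∀ x : ℝ, |f' x| ≤ C * Real.exp (-M * x ^ 2)) :
    ∀ θ : ℝ, 0 ≤ θ →
      (∫ x : ℝ, (f (x + θ) - f x) ^ 2) ≤
        θ ^ 2 * (2 * C ^ 2 * (∫ x in Ioi (0 : ℝ), Real.exp (-2 * M * x ^ 2)) * 2
          + C ^ 2 * θ) :=
  stmt_2_general C M hM f f' hf hbound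
end

section
/- Let K be a symmetric kernel in L¹(ℝ) with ∫K = 1 and ∫|z|(1+|z|^{1/2})K(z)dz < ∞, and let f : ℝ → ℝ be a square-integrable function satisfying the Nikol'skii condition ∫ℝ(f(x+θ)−f(x))²dx ≤ c(θ²+|θ|³) for all θ ∈ ℝ. Then for every h ∈ (0,1], the convolution bias satisfies ∫ℝ (∫ℝ K(z)(f(hz+x) − f(x)) dz)² dx ≤ c·(∫ℝ |z|(1+|z|^{1/2})K(z)dz)² · h². -/
/-!
Minkowski's integral inequality bounds the `L²`-norm of `x ↦ ∫ K(z) (f(hz+x) − f(x)) dz` by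
`∫ K(z) ‖f(hz+·) − f‖₂ dz`, and the Nikol'skii condition together with `h³ ≤ h²` gives
`‖f(hz+·) − f‖₂ ≤ √c h |z|(1+|z|^{1/2})`. For `p = 2`, Minkowski's inequality follows from the
weighted Cauchy–Schwarz inequality `(∫ a)² ≤ (∫ N)(∫ a²/N)`, integrated in `x` and combined with
Tonelli, for any weight `N(z) ≥ ‖F(·, z)‖₂`.
-/

open MeasureTheory Real Set

open scoped ENNReal

section

variable {α β : Type*} [MeasurableSpace α] [MeasurableSpace β] {μ : Measure α} {ν : Measure β}

theorem ENNReal.sq_lintegral_le_lintegral_mul_lintegral_sq_div {a w : α → ℝ≥0∞}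
    (ha : AEMeasurable a μ) (hw : AEMeasurable w μ) (hw_top : ∀ x, w x ≠ ⊤)
    (ha0 : ∀ x, w x = 0 → a x = 0) :
    (∫⁻ x, a x ∂μ) ^ 2 ≤ (∫⁻ x, w x ∂μ) * ∫⁻ x, a x ^ 2 / w x ∂μ := by
  have hsplit : ∀ x, a x = w x ^ (2⁻¹ : ℝ) * (a x ^ 2 / w x) ^ (2⁻¹ : ℝ) := by
    intro x
    rw [← ENNReal.mul_rpow_of_nonneg _ _ (by norm_num),
      ENNReal.mul_div_cancel' (fun hx => by simp [ha0 x hx]) (fun hx => absurd hx (hw_top x)),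
      ← ENNReal.rpow_natCast, ← ENNReal.rpow_mul]
    norm_num
  have hsq : ∀ b : ℝ≥0∞, (b ^ (2⁻¹ : ℝ)) ^ (2 : ℝ) = b := fun b => by
    rw [← ENNReal.rpow_mul]; norm_num
  have hCS := ENNReal.lintegral_mul_le_Lp_mul_Lq μ Real.HolderConjugate.two_two
    (hw.pow_const (2⁻¹ : ℝ)) (((ha.pow_const 2).div hw).pow_const (2⁻¹ : ℝ))
  simp only [Pi.mul_apply, Pi.div_apply, ← hsplit, hsq, one_div] at hCS
  calc (∫⁻ x, a x ∂μ) ^ 2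
      ≤ ((∫⁻ x, w x ∂μ) ^ (2⁻¹ : ℝ) * (∫⁻ x, a x ^ 2 / w x ∂μ) ^ (2⁻¹ : ℝ)) ^ 2 := by
        gcongr
    _ = (∫⁻ x, w x ∂μ) * ∫⁻ x, a x ^ 2 / w x ∂μ := by
        rw [mul_pow, ← ENNReal.rpow_two, ← ENNReal.rpow_two, hsq, hsq]

theorem integral_sq_eq_toReal_lintegral_enorm_sq {G : α → ℝ} (hG : AEStronglyMeasurable G μ) :
    ∫ x, G x ^ 2 ∂μ = (∫⁻ x, ‖G x‖ₑ ^ 2 ∂μ).toReal := by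
  rw [integral_eq_lintegral_of_nonneg_ae (.of_forall fun x => sq_nonneg _) (hG.pow 2)]
  simp [Real.enorm_eq_ofReal_abs, ← ENNReal.ofReal_pow]

theorem MeasureTheory.MemLp.lintegral_enorm_sq_eq_ofReal_integral_sq {G : α → ℝ}
    (hG : MemLp G 2 μ) :
    ∫⁻ x, ‖G x‖ₑ ^ 2 ∂μ = ENNReal.ofReal (∫ x, G x ^ 2 ∂μ) := by
  rw [ofReal_integral_eq_lintegral_ofReal hG.integrable_sq
    (.of_forall fun x => sq_nonneg _)]
  simp [Real.enorm_eq_ofReal_abs, ← ENNReal.ofReal_pow]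

theorem lintegral_sq_lintegral_le_sq_lintegral [SFinite μ] [SFinite ν] {F : α → β → ℝ≥0∞}
    {N : β → ℝ≥0∞}
    (hF : AEMeasurable (Function.uncurry F) (μ.prod ν)) (hN : AEMeasurable N ν)
    (hN_top : ∀ y, N y ≠ ⊤) (hFN0 : ∀ y, N y = 0 → ∀ x, F x y = 0)
    (hFN : ∀ y, ∫⁻ x, F x y ^ 2 ∂μ ≤ N y ^ 2) :
    ∫⁻ x, (∫⁻ y, F x y ∂ν) ^ 2 ∂μ ≤ (∫⁻ y, N y ∂ν) ^ 2 := by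
  have hslices : ∀ᵐ x ∂μ, AEMeasurable (F x) ν :=
    hF.aestronglyMeasurable.prodMk_left.mono fun x hx => hx.aemeasurable
  have hG : AEMeasurable (Function.uncurry fun x y => F x y ^ 2 / N y) (μ.prod ν) :=
    (hF.pow_const 2).div (hN.comp_quasiMeasurePreserving Measure.quasiMeasurePreserving_snd)
  have hdiv : ∀ y, ∫⁻ x, F x y ^ 2 / N y ∂μ ≤ N y := by
    intro y
    by_cases hy : N y = 0
    · simp [hy, hFN0 y hy]
    · simp_rw [div_eq_mul_inv]
      rw [lintegral_mul_const' _ _ (ENNReal.inv_ne_top.mpr hy), ← div_eq_mul_inv]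
      exact ENNReal.div_le_of_le_mul (sq (N y) ▸ hFN y)
  calc ∫⁻ x, (∫⁻ y, F x y ∂ν) ^ 2 ∂μ
      ≤ ∫⁻ x, (∫⁻ y, N y ∂ν) * ∫⁻ y, F x y ^ 2 / N y ∂ν ∂μ :=
        lintegral_mono_ae <| hslices.mono fun x hx =>
          ENNReal.sq_lintegral_le_lintegral_mul_lintegral_sq_div hx hN hN_top
            fun y hy => hFN0 y hy x
    _ = (∫⁻ y, N y ∂ν) * ∫⁻ y, ∫⁻ x, F x y ^ 2 / N y ∂μ ∂ν := by
        rw [← lintegral_lintegral_swap hG]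
        exact lintegral_const_mul'' _ hG.lintegral_prod_right'
    _ ≤ (∫⁻ y, N y ∂ν) ^ 2 := by
        rw [sq]
        gcongr with y
        exact hdiv y

theorem MeasureTheory.AEStronglyMeasurable.comp_add_prod {G X : Type*} [Add G]
    [MeasurableSpace G] [MeasurableAdd₂ G] {μ : Measure G} [SFinite μ] [μ.IsAddLeftInvariant]
    [SFinite ν] [TopologicalSpace X] {f : G → X} (hf : AEStronglyMeasurable f μ) {φ : β → G}
    (hφ : Measurable φ) :
    AEStronglyMeasurable (fun p : G × β => f (φ p.2 + p.1)) (μ.prod ν) :=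
  hf.comp_quasiMeasurePreserving <| QuasiMeasurePreserving.prod_of_left (by fun_prop)
    (.of_forall fun y => (measurePreserving_add_left μ (φ y)).quasiMeasurePreserving)

end

noncomputable def nikolskiiWeight (z : ℝ) : ℝ := |z| * (1 + |z| ^ ((1 : ℝ) / 2))

theorem measurable_nikolskiiWeight : Measurable nikolskiiWeight := by
  unfold nikolskiiWeight; fun_prop

theorem nikolskiiWeight_nonneg (z : ℝ) : 0 ≤ nikolskiiWeight z := by
  unfold nikolskiiWeight; positivity

theorem nikolskiiWeight_eq_zero {z : ℝ} (hz : nikolskiiWeight z = 0) : z = 0 := by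
  rcases mul_eq_zero.mp hz with hz0 | hs
  · exact abs_eq_zero.mp hz0
  · exact absurd hs (by positivity)

theorem sq_add_abs_pow_three_le {h z : ℝ} (h0 : 0 ≤ h) (h1 : h ≤ 1) :
    (h * z) ^ 2 + |h * z| ^ 3 ≤ (h * nikolskiiWeight z) ^ 2 := by
  unfold nikolskiiWeight
  set s := |z| ^ ((1 : ℝ) / 2)
  have hs : 0 ≤ s := by positivity
  have hz : |z| = s ^ 2 := by
    rw [← Real.rpow_natCast, ← Real.rpow_mul (abs_nonneg z)]; norm_num
  rw [abs_mul, abs_of_nonneg h0, mul_pow h z, ← sq_abs z, hz]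
  have h3 : h ^ 3 ≤ h ^ 2 := pow_le_pow_of_le_one h0 h1 (by norm_num)
  nlinarith [mul_le_mul_of_nonneg_right h3 (pow_nonneg hs 6), pow_nonneg hs 5, sq_nonneg h]

section Kernel

variable {K f : ℝ → ℝ} {c h : ℝ}

theorem lintegral_enorm_translate_sub_sq_le (hf : MemLp f 2 volume) (hc : 0 ≤ c)
    (hNik : ∀ θ : ℝ, ∫ x, (f (x + θ) - f x) ^ 2 ≤ c * (θ ^ 2 + |θ| ^ 3))
    (h0 : 0 ≤ h) (h1 : h ≤ 1) (z : ℝ) :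
    ∫⁻ x, ‖f (h * z + x) - f x‖ₑ ^ 2 ≤ ENNReal.ofReal (c * (h * nikolskiiWeight z) ^ 2) := by
  have hmem : MemLp (fun x => f (h * z + x) - f x) 2 volume :=
    (hf.comp_measurePreserving (measurePreserving_add_left volume (h * z))).sub hf
  rw [hmem.lintegral_enorm_sq_eq_ofReal_integral_sq]
  refine ENNReal.ofReal_le_ofReal ?_
  simp_rw [add_comm (h * z)]
  exact (hNik (h * z)).trans (mul_le_mul_of_nonneg_left (sq_add_abs_pow_three_le h0 h1) hc)

theorem lintegral_enorm_mul_translate_sub_sq_le (hK0 : ∀ z, 0 ≤ K z) (hf : MemLp f 2 volume)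
    (hc : 0 ≤ c) (hNik : ∀ θ : ℝ, ∫ x, (f (x + θ) - f x) ^ 2 ≤ c * (θ ^ 2 + |θ| ^ 3))
    (h0 : 0 ≤ h) (h1 : h ≤ 1) (z : ℝ) :
    ∫⁻ x, ‖K z * (f (h * z + x) - f x)‖ₑ ^ 2 ≤
      ENNReal.ofReal (√c * h * (nikolskiiWeight z * K z)) ^ 2 := by
  simp_rw [enorm_mul, mul_pow]
  rw [lintegral_const_mul' _ _ (by finiteness)]
  calc ‖K z‖ₑ ^ 2 * ∫⁻ x, ‖f (h * z + x) - f x‖ₑ ^ 2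
      ≤ ‖K z‖ₑ ^ 2 * ENNReal.ofReal (c * (h * nikolskiiWeight z) ^ 2) := by
        gcongr
        exact lintegral_enorm_translate_sub_sq_le hf hc hNik h0 h1 z
    _ = ENNReal.ofReal (√c * h * (nikolskiiWeight z * K z)) ^ 2 := by
        have hw := nikolskiiWeight_nonneg z
        rw [Real.enorm_eq_ofReal (hK0 z), ← ENNReal.ofReal_pow (hK0 z),
          ← ENNReal.ofReal_mul (by positivity), ← ENNReal.ofReal_pow (by positivity [hK0 z])]
        congr 1
        linear_combination -(h * nikolskiiWeight z * K z) ^ 2 * Real.sq_sqrt hc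

theorem mul_translate_sub_eq_zero_of_ofReal_eq_zero (hK0 : ∀ z, 0 ≤ K z) (hc : 0 < c)
    (h0 : 0 < h) {z : ℝ} (hz : ENNReal.ofReal (√c * h * (nikolskiiWeight z * K z)) = 0) (x : ℝ) :
    K z * (f (h * z + x) - f x) = 0 := by
  have hwK : nikolskiiWeight z * K z = 0 :=
    le_antisymm (nonpos_of_mul_nonpos_right (ENNReal.ofReal_eq_zero.mp hz)
      (mul_pos (Real.sqrt_pos.mpr hc) h0)) (mul_nonneg (nikolskiiWeight_nonneg z) (hK0 z))
  rcases mul_eq_zero.mp hwK with hw | hK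
  · simp [nikolskiiWeight_eq_zero hw]
  · simp [hK]

end Kernel

theorem stmt_4_general (K : ℝ → ℝ) (hK0 : ∀ z, 0 ≤ K z)
    (hKint : Integrable K)
    (hKmom : Integrable fun z : ℝ => |z| * (1 + |z| ^ ((1 : ℝ) / 2)) * K z)
    (f : ℝ → ℝ) (hf : MemLp f 2 volume) (c : ℝ) (hc : 0 < c)
    (hNik : ∀ θ : ℝ, (∫ x : ℝ, (f (x + θ) - f x) ^ 2) ≤ c * (θ ^ 2 + |θ| ^ 3)) :
    ∀ h : ℝ, h ∈ Ioc (0 : ℝ) 1 →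
      (∫ x : ℝ, (∫ z : ℝ, K z * (f (h * z + x) - f x)) ^ 2) ≤
        c * (∫ z : ℝ, |z| * (1 + |z| ^ ((1 : ℝ) / 2)) * K z) ^ 2 * h ^ 2 := by
  rintro h ⟨h0, h1⟩
  change _ ≤ c * (∫ z, nikolskiiWeight z * K z) ^ 2 * h ^ 2
  have hwK0 (z : ℝ) : 0 ≤ nikolskiiWeight z * K z := mul_nonneg (nikolskiiWeight_nonneg z) (hK0 z)
  set N : ℝ → ℝ≥0∞ := fun z => ENNReal.ofReal (√c * h * (nikolskiiWeight z * K z))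
  have hF : AEStronglyMeasurable (fun p : ℝ × ℝ => K p.2 * (f (h * p.2 + p.1) - f p.1))
      (volume.prod volume) :=
    hKint.aestronglyMeasurable.comp_snd.mul
      ((hf.aestronglyMeasurable.comp_add_prod (measurable_const_mul h)).sub
        hf.aestronglyMeasurable.comp_fst)
  have hNint : ∫⁻ z, N z = ENNReal.ofReal (√c * h * ∫ z, nikolskiiWeight z * K z) := by
    rw [← integral_const_mul]
    exact (ofReal_integral_eq_lintegral_ofReal (hKmom.const_mul (√c * h))
      (.of_forall fun z => mul_nonneg (by positivity) (hwK0 z))).symm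
  calc ∫ x, (∫ z, K z * (f (h * z + x) - f x)) ^ 2
      = (∫⁻ x, ‖∫ z, K z * (f (h * z + x) - f x)‖ₑ ^ 2).toReal :=
        integral_sq_eq_toReal_lintegral_enorm_sq hF.integral_prod_right'
    _ ≤ ((∫⁻ z, N z) ^ 2).toReal := by
        refine ENNReal.toReal_mono (by simp [hNint]) ((lintegral_mono fun x => ?_).trans
          (lintegral_sq_lintegral_le_sq_lintegral (by exact hF.enorm)
            (aemeasurable_const.mul (measurable_nikolskiiWeight.aemeasurable.mul
              hKint.aemeasurable)).ennreal_ofReal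
            (fun _ => ENNReal.ofReal_ne_top)
            (fun z hz x => enorm_eq_zero.mpr
              (mul_translate_sub_eq_zero_of_ofReal_eq_zero hK0 hc h0 hz x))
            (lintegral_enorm_mul_translate_sub_sq_le hK0 hf hc.le hNik h0.le h1)))
        gcongr
        exact enorm_integral_le_lintegral_enorm _
    _ = c * (∫ z, nikolskiiWeight z * K z) ^ 2 * h ^ 2 := by
        rw [hNint, ENNReal.toReal_pow, ENNReal.toReal_ofReal
          (mul_nonneg (by positivity) (integral_nonneg hwK0)), mul_pow, mul_pow, Real.sq_sqrt hc.le]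
        ring

/-- Bias bound in Proposition 1 for `β = 1`: for a symmetric nonnegative kernel
with unit mass and a square-integrable `f` satisfying the Nikol'skii condition,
the integrated squared convolution bias is at most
`c (∫ |z|(1+|z|^{1/2}) K(z) dz)² h²` for all `h ∈ (0,1]`. -/
theorem stmt_4 (K : ℝ → ℝ) (hK0 : ∀ z, 0 ≤ K z) (hKsym : ∀ z, K (-z) = K z)
    (hKint : Integrable K) (hKmass : (∫ z : ℝ, K z) = 1)
    (hKmom : Integrable fun z : ℝ => |z| * (1 + |z| ^ ((1 : ℝ) / 2)) * K z)
    (f : ℝ → ℝ) (hf : MemLp f 2 volume) (c : ℝ) (hc : 0 < c)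
    (hNik : ∀ θ : ℝ, (∫ x : ℝ, (f (x + θ) - f x) ^ 2) ≤ c * (θ ^ 2 + |θ| ^ 3)) :
    ∀ h : ℝ, h ∈ Ioc (0 : ℝ) 1 →
      (∫ x : ℝ, (∫ z : ℝ, K z * (f (h * z + x) - f x)) ^ 2) ≤
        c * (∫ z : ℝ, |z| * (1 + |z| ^ ((1 : ℝ) / 2)) * K z) ^ 2 * h ^ 2 :=
  stmt_4_general K hK0 hKint hKmom f hf c hc hNik
end

section
/- Let p : [t₀,T] × ℝ → ℝ be continuously differentiable in t with |∂_t p(t,x)| ≤ (c₃/t₀^{q₃}) exp(−m₃(x−x₀)²/T) for t ∈ [t₀,T], and let K ∈ L¹(ℝ) be a nonnegative kernel with ∫K = 1. For the uniform grid t_j = t₀ + j(T−t₀)/n, define the discretization bias D_n(x) = (1/(T−t₀)) Σ_{j=0}^{n−1} ∫_{t_j}^{t_{j+1}} ∫ℝ K_h(z−x)(p(t,z) − p(t_j,z)) dz dt. Then ∫ℝ D_n(x)² dx ≤ C / (n² t₀^{2q₃}), with C depending only on c₃, m₃, T, x₀ (not on h, n, t₀). -/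
/-!
By the mean value theorem, on the grid cell `[t_j, t_{j+1}]` we have
`|p t z - p t_j z| ≤ (T - t₀)/n · E z`, where `E` is the Gaussian envelope of `∂ₜ p`; averaging over
the cells gives the pointwise bound `|D_n x| ≤ (T - t₀)/n · (K_h ⋆ E) x`. The smoothed envelope
`K_h ⋆ E` takes values in `[0, sup E]` and has the same integral as `E`, so
`∫ D_n² ≤ ((T - t₀)/n)² · sup E · ∫ E`, uniformly in `h`, with `sup E = c₃/t₀^{q₃}` and `∫ E` a
Gaussian integral.
-/

open MeasureTheory Real Set intervalIntegral

theorem add_mul_sub_div_mem_Icc {a b s : ℝ} {n : ℕ} (hab : a ≤ b) (hn : 0 < n) (hs₀ : 0 ≤ s)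
    (hsn : s ≤ n) : a + s * (b - a) / n ∈ Icc a b := by
  have hba : 0 ≤ b - a := sub_nonneg.2 hab
  have : s * (b - a) / n ≤ b - a := by
    rw [div_le_iff₀ (Nat.cast_pos.2 hn)]; nlinarith
  exact ⟨le_add_of_nonneg_right (by positivity), by linarith⟩

theorem abs_average_sum_intervalIntegral_le {a b M : ℝ} {n : ℕ} (hab : a < b) (hn : 0 < n)
    {F : ℕ → ℝ → ℝ}
    (hF : ∀ j < n, ∀ t ∈ Ioc (a + j * (b - a) / n) (a + (j + 1) * (b - a) / n), |F j t| ≤ M) :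
    |1 / (b - a) * ∑ j ∈ Finset.range n,
      ∫ t in (a + j * (b - a) / n)..(a + (j + 1) * (b - a) / n), F j t| ≤ M := by
  have hba : 0 < b - a := sub_pos.2 hab
  have hnR : (0 : ℝ) < n := Nat.cast_pos.2 hn
  have hstep : ∀ j ∈ Finset.range n,
      |∫ t in (a + j * (b - a) / n)..(a + (j + 1) * (b - a) / n), F j t| ≤ M * ((b - a) / n) := by
    intro j hj
    have hlen : a + (j + 1) * (b - a) / n - (a + j * (b - a) / n) = (b - a) / n := by ring
    have hle : a + j * (b - a) / n ≤ a + (j + 1) * (b - a) / n := by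
      linarith [div_pos hba hnR]
    have := norm_integral_le_of_norm_le_const (a := a + j * (b - a) / n)
      (b := a + (j + 1) * (b - a) / n) (f := F j) (C := M) fun t ht =>
        hF j (Finset.mem_range.1 hj) t (uIoc_of_le hle ▸ ht)
    rwa [hlen, abs_of_pos (div_pos hba hnR)] at this
  calc _ = 1 / (b - a) * |∑ j ∈ Finset.range n,
        ∫ t in (a + j * (b - a) / n)..(a + (j + 1) * (b - a) / n), F j t| := by
        rw [abs_mul, abs_of_pos (one_div_pos.2 hba)]
    _ ≤ 1 / (b - a) * ∑ j ∈ Finset.range n, M * ((b - a) / n) := by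
        gcongr
        exact (Finset.abs_sum_le_sum_abs _ _).trans (Finset.sum_le_sum hstep)
    _ = M := by simp only [Finset.sum_const, Finset.card_range, nsmul_eq_mul]; field_simp

theorem abs_discretizationBias_le {t₀ T : ℝ} {n : ℕ} (hT : t₀ < T) (hn : 0 < n)
    {p p' : ℝ → ℝ → ℝ} {w E : ℝ → ℝ}
    (hderiv : ∀ x : ℝ, ∀ t ∈ Icc t₀ T, HasDerivAt (fun τ => p τ x) (p' t x) t)
    (hbound : ∀ t ∈ Icc t₀ T, ∀ x : ℝ, |p' t x| ≤ E x)
    (hw : ∀ z, 0 ≤ w z) (hwE : Integrable (fun z => w z * E z)) :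
    |1 / (T - t₀) * ∑ j ∈ Finset.range n,
      ∫ t in (t₀ + j * (T - t₀) / n)..(t₀ + (j + 1) * (T - t₀) / n),
        ∫ z : ℝ, w z * (p t z - p (t₀ + j * (T - t₀) / n) z)|
      ≤ (T - t₀) / n * ∫ z, w z * E z := by
  apply abs_average_sum_intervalIntegral_le hT hn
  intro j hj t ht
  set a := t₀ + j * (T - t₀) / n
  set b := t₀ + (j + 1) * (T - t₀) / n
  have ha : a ∈ Icc t₀ T := add_mul_sub_div_mem_Icc hT.le hn j.cast_nonneg (by exact_mod_cast hj.le)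
  have hb : b ∈ Icc t₀ T := add_mul_sub_div_mem_Icc hT.le hn (by positivity) (by exact_mod_cast hj)
  have hsub : Icc a b ⊆ Icc t₀ T := Icc_subset_Icc ha.1 hb.2
  have hlen : b - a = (T - t₀) / n := by ring
  have hincr : ∀ z, |p t z - p a z| ≤ (T - t₀) / n * E z := by
    intro z
    have hE : 0 ≤ E z := (abs_nonneg _).trans (hbound a ha z)
    have := norm_image_sub_le_of_norm_deriv_le_segment' (f := fun τ => p τ z)
      (fun u hu => (hderiv z u (hsub hu)).hasDerivWithinAt)
      (fun u hu => hbound u (hsub (Ico_subset_Icc_self hu)) z) t (Ioc_subset_Icc_self ht)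
    calc |p t z - p a z| ≤ E z * (t - a) := this
      _ ≤ E z * (b - a) := by gcongr; exact ht.2
      _ = (T - t₀) / n * E z := by rw [hlen, mul_comm]
  calc |∫ z, w z * (p t z - p a z)| ≤ ∫ z, (T - t₀) / n * (w z * E z) := by
        rw [← Real.norm_eq_abs]
        refine norm_integral_le_of_norm_le (hwE.const_mul _) (ae_of_all _ fun z => ?_)
        rw [Real.norm_eq_abs, abs_mul, abs_of_nonneg (hw z), mul_left_comm]
        exact mul_le_mul_of_nonneg_left (hincr z) (hw z)
    _ = (T - t₀) / n * ∫ z, w z * E z := integral_const_mul _ _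

/-- The smoothed envelope `K_h ⋆ E` above, with `K_h u = K (u / h) / h`. -/
noncomputable def kernelSmooth (K : ℝ → ℝ) (h : ℝ) (E : ℝ → ℝ) (x : ℝ) : ℝ :=
  ∫ z, K ((z - x) / h) / h * E z

section KernelSmooth

variable {K E : ℝ → ℝ} {h B : ℝ}

theorem integrable_kernel_mul (hK : Integrable K) (hh : h ≠ 0) (hE : AEStronglyMeasurable E)
    (hEB : ∀ z, ‖E z‖ ≤ B) (x : ℝ) : Integrable fun z => K ((z - x) / h) / h * E z :=
  (((hK.comp_div hh).comp_sub_right x).div_const h).mul_bdd hE (ae_of_all _ hEB)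

theorem kernelSmooth_eq_convolution :
    kernelSmooth K h E =
      convolution E (fun u => K (u / -h) / h) (ContinuousLinearMap.mul ℝ ℝ).flip volume := by
  ext x
  simp only [kernelSmooth, convolution, ContinuousLinearMap.flip_apply,
    ContinuousLinearMap.mul_apply']
  congr with z
  rw [show (x - z) / -h = (z - x) / h by ring]

theorem integral_comp_div_neg_div (hh : 0 < h) : ∫ u, K (u / -h) / h = ∫ u, K u := by
  rw [MeasureTheory.integral_div, Measure.integral_comp_div K (-h), abs_neg, abs_of_pos hh,
    smul_eq_mul, mul_div_cancel_left₀ _ hh.ne']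

theorem integral_comp_sub_div_div (hh : 0 < h) (x : ℝ) :
    ∫ z, K ((z - x) / h) / h = ∫ u, K u := by
  rw [MeasureTheory.integral_div, integral_sub_right_eq_self (fun z => K (z / h)) x,
    Measure.integral_comp_div, abs_of_pos hh, smul_eq_mul, mul_div_cancel_left₀ _ hh.ne']

theorem integral_kernelSmooth (hK : Integrable K) (hE : Integrable E) (hh : 0 < h) :
    ∫ x, kernelSmooth K h E x = (∫ u, K u) * ∫ z, E z := by
  rw [kernelSmooth_eq_convolution,
    integral_convolution _ hE ((hK.comp_div (neg_ne_zero.2 hh.ne')).div_const h),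
    integral_comp_div_neg_div hh]
  simp only [ContinuousLinearMap.flip_apply, ContinuousLinearMap.mul_apply']

theorem integrable_kernelSmooth (hK : Integrable K) (hE : Integrable E) (hh : h ≠ 0) :
    Integrable (kernelSmooth K h E) := by
  rw [kernelSmooth_eq_convolution]
  exact hE.integrable_convolution _ ((hK.comp_div (neg_ne_zero.2 hh)).div_const h)

theorem kernelSmooth_nonneg (hK₀ : ∀ u, 0 ≤ K u) (hh : 0 ≤ h) (hE₀ : ∀ z, 0 ≤ E z) (x : ℝ) :
    0 ≤ kernelSmooth K h E x :=
  integral_nonneg fun z => mul_nonneg (div_nonneg (hK₀ _) hh) (hE₀ z)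

theorem kernelSmooth_le (hK₀ : ∀ u, 0 ≤ K u) (hK : Integrable K) (hh : 0 < h)
    (hE : AEStronglyMeasurable E) (hEB : ∀ z, ‖E z‖ ≤ B) (x : ℝ) :
    kernelSmooth K h E x ≤ B * ∫ u, K u := by
  have hKh : Integrable fun z => K ((z - x) / h) / h :=
    ((hK.comp_div hh.ne').comp_sub_right x).div_const h
  calc kernelSmooth K h E x ≤ ∫ z, B * (K ((z - x) / h) / h) :=
        integral_mono (integrable_kernel_mul hK hh.ne' hE hEB x) (hKh.const_mul B) fun z => by
          rw [mul_comm B]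
          exact mul_le_mul_of_nonneg_left ((le_abs_self _).trans (hEB z))
            (div_nonneg (hK₀ _) hh.le)
    _ = B * ∫ u, K u := by rw [MeasureTheory.integral_const_mul, integral_comp_sub_div_div hh]

theorem integral_sq_le_of_abs_le_kernelSmooth {D : ℝ → ℝ} {δ : ℝ} (hK₀ : ∀ u, 0 ≤ K u)
    (hK : Integrable K) (hh : 0 < h) (hE : Integrable E) (hE₀ : ∀ z, 0 ≤ E z)
    (hEB : ∀ z, E z ≤ B) (hD : ∀ x, |D x| ≤ δ * kernelSmooth K h E x) :
    ∫ x, D x ^ 2 ≤ δ ^ 2 * B * (∫ u, K u) ^ 2 * ∫ z, E z := by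
  have hEB' : ∀ z, ‖E z‖ ≤ B := fun z => by rw [Real.norm_of_nonneg (hE₀ z)]; exact hEB z
  have hG₀ := kernelSmooth_nonneg hK₀ hh.le hE₀
  have hpt : ∀ x, D x ^ 2 ≤ δ ^ 2 * (B * ∫ u, K u) * kernelSmooth K h E x := fun x =>
    calc D x ^ 2 ≤ (δ * kernelSmooth K h E x) ^ 2 := sq_le_sq.2 ((hD x).trans (le_abs_self _))
      _ = δ ^ 2 * kernelSmooth K h E x * kernelSmooth K h E x := by ring
      _ ≤ δ ^ 2 * (B * ∫ u, K u) * kernelSmooth K h E x := by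
          gcongr
          · exact hG₀ x
          · exact kernelSmooth_le hK₀ hK hh hE.1 hEB' x
  calc ∫ x, D x ^ 2 ≤ ∫ x, δ ^ 2 * (B * ∫ u, K u) * kernelSmooth K h E x :=
        integral_mono_of_nonneg (ae_of_all _ fun x => sq_nonneg _)
          ((integrable_kernelSmooth hK hE hh.ne').const_mul _) (ae_of_all _ hpt)
    _ = δ ^ 2 * B * (∫ u, K u) ^ 2 * ∫ z, E z := by
        rw [MeasureTheory.integral_const_mul, integral_kernelSmooth hK hE hh]; ring

end KernelSmooth

theorem integral_exp_neg_mul_sub_sq_div (m T x₀ : ℝ) :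
    ∫ z, exp (-m * (z - x₀) ^ 2 / T) = √(π / (m / T)) := by
  simp_rw [show ∀ z, -m * (z - x₀) ^ 2 / T = -(m / T) * (z - x₀) ^ 2 from fun z => by ring]
  rw [integral_sub_right_eq_self (fun z => exp (-(m / T) * z ^ 2)) x₀, integral_gaussian]

theorem integrable_exp_neg_mul_sub_sq_div {m T : ℝ} (hmT : 0 < m / T) (x₀ : ℝ) :
    Integrable fun z => exp (-m * (z - x₀) ^ 2 / T) := by
  simp_rw [show ∀ z, -m * (z - x₀) ^ 2 / T = -(m / T) * (z - x₀) ^ 2 from fun z => by ring]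
  exact (integrable_exp_neg_mul_sq hmT).comp_sub_right x₀

theorem stmt_12_general (c₃ m₃ q₃ T x₀ : ℝ) (hc₃ : 0 < c₃) (hm₃ : 0 < m₃)
    (hT : 0 < T) :
    ∃ C > 0, ∀ (t₀ : ℝ), 0 < t₀ → t₀ < T →
      ∀ (n : ℕ), 0 < n →
      ∀ (h : ℝ), 0 < h →
      ∀ (p p' : ℝ → ℝ → ℝ),
        (∀ x : ℝ, ∀ t ∈ Icc t₀ T, HasDerivAt (fun τ => p τ x) (p' t x) t) →
        (∀ t ∈ Icc t₀ T, ∀ x : ℝ,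
          |p' t x| ≤ c₃ / t₀ ^ q₃ * Real.exp (-m₃ * (x - x₀) ^ 2 / T)) →
      ∀ K : ℝ → ℝ, (∀ z, 0 ≤ K z) → Integrable K → (∫ z : ℝ, K z) = 1 →
        (∫ x : ℝ,
          ((1 / (T - t₀)) * ∑ j ∈ Finset.range n,
            ∫ t in (t₀ + j * (T - t₀) / n)..(t₀ + (j + 1) * (T - t₀) / n),
              ∫ z : ℝ, (K ((z - x) / h) / h) *
                (p t z - p (t₀ + j * (T - t₀) / n) z)) ^ 2)
        ≤ C / (n ^ 2 * t₀ ^ (2 * q₃)) := by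
  refine ⟨T ^ 2 * c₃ ^ 2 * √(π / (m₃ / T)), by positivity, ?_⟩
  intro t₀ ht₀ ht₀T n hn h hh p p' hderiv hbound K hK₀ hK hK₁
  set c := c₃ / t₀ ^ q₃ with hc
  set E : ℝ → ℝ := fun z => c * exp (-m₃ * (z - x₀) ^ 2 / T)
  have hE : Integrable E := (integrable_exp_neg_mul_sub_sq_div (div_pos hm₃ hT) x₀).const_mul c
  have hE₀ : ∀ z, 0 ≤ E z := fun z => by positivity
  have hEc : ∀ z, E z ≤ c := fun z => mul_le_of_le_one_right (by positivity)
    (exp_le_one_iff.2 (by rw [neg_mul, neg_div]; exact neg_nonpos.2 (by positivity)))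
  have hL2 := integral_sq_le_of_abs_le_kernelSmooth hK₀ hK hh hE hE₀ hEc fun x =>
    abs_discretizationBias_le ht₀T hn hderiv hbound (fun z => div_nonneg (hK₀ _) hh.le)
      (integrable_kernel_mul hK hh.ne' hE.1
        (fun z => (norm_of_nonneg (hE₀ z)).trans_le (hEc z)) x)
  rw [hK₁, MeasureTheory.integral_const_mul, integral_exp_neg_mul_sub_sq_div] at hL2
  calc _ ≤ _ := hL2
    _ ≤ (T / n) ^ 2 * c * 1 ^ 2 * (c * √(π / (m₃ / T))) := by gcongr; linarith
    _ = T ^ 2 * c₃ ^ 2 * √(π / (m₃ / T)) / (n ^ 2 * t₀ ^ (2 * q₃)) := by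
        rw [hc, mul_comm 2 q₃, rpow_mul ht₀.le, rpow_two]
        field_simp

/-- Discretization bias estimate of Proposition 4: if `|∂ₜ p(t,x)| ≤
(c₃/t₀^{q₃}) exp(-m₃(x-x₀)²/T)` on `[t₀,T]`, then the squared L² norm of the
discretization bias `D_n` is at most `C/(n² t₀^{2q₃})`, with `C` depending only
on `c₃, m₃, T, x₀`. -/
theorem stmt_12 (c₃ m₃ q₃ T x₀ : ℝ) (hc₃ : 0 < c₃) (hm₃ : 0 < m₃) (hq₃ : 0 < q₃)
    (hT : 0 < T) :
    ∃ C > 0, ∀ (t₀ : ℝ), 0 < t₀ → t₀ < T →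
      ∀ (n : ℕ), 0 < n →
      ∀ (h : ℝ), 0 < h →
      ∀ (p p' : ℝ → ℝ → ℝ),
        (∀ x : ℝ, ∀ t ∈ Icc t₀ T, HasDerivAt (fun τ => p τ x) (p' t x) t) →
        (∀ t ∈ Icc t₀ T, ∀ x : ℝ,
          |p' t x| ≤ c₃ / t₀ ^ q₃ * Real.exp (-m₃ * (x - x₀) ^ 2 / T)) →
      ∀ K : ℝ → ℝ, (∀ z, 0 ≤ K z) → Integrable K → (∫ z : ℝ, K z) = 1 →
        (∫ x : ℝ,
          ((1 / (T - t₀)) * ∑ j ∈ Finset.range n,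
            ∫ t in (t₀ + j * (T - t₀) / n)..(t₀ + (j + 1) * (T - t₀) / n),
              ∫ z : ℝ, (K ((z - x) / h) / h) *
                (p t z - p (t₀ + j * (T - t₀) / n) z)) ^ 2)
        ≤ C / (n ^ 2 * t₀ ^ (2 * q₃)) :=
  stmt_12_general c₃ m₃ q₃ T x₀ hc₃ hm₃ hT
end
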